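/- Let β ∈ (π/2, π) and N ≥ 2. There exist constants d₁, d₂ > 0 and ε₀ > 0 such that for all ε ∈ (0, ε₀), d₁ |Ω_β \ 𝑇̃Ω_β(ε)|^{(N+2l_β−2)/N} ≤ λ₁[𝑇̃Ω_β(ε)] − λ₁[Ω_β] ≤ d₂ |Ω_β \ 𝑇̃Ω_β(ε)|^{(N+2l_β−2)/N}, assuming (i) domain monotonicity of the first Dirichlet eigenvalue, (ii) the asymptotic expansion λ₁[Ω_β(ε)] = λ₁[Ω_β] + b|Ω_β \ Ω_β(ε)|^{(N+2l_β−2)/N} + o(·) with b > 0, and (iii) the inclusions Ω_β(ε) ⊆ 𝑇̃Ω_β(ε) ⊆ Ω_β(Aε) with A = sin β/√(2(1−cos β)). -/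

import Mathlib

open Real MeasureTheory
open scoped ENNReal

/-!
By monotonicity of `λ₁` and the inclusions `Ω_β(ε) ⊆ 𝑇̃Ω_β(ε) ⊆ Ω_β(Aε)`, the gap
`λ₁[𝑇̃Ω_β(ε)] - λ₁[Ω_β]` lies between the gaps of the truncated cones `Ω_β(Aε)` and
`Ω_β(ε)`, which the asymptotic expansion (with `η = b/2`) pins between `b/2` and `3b/2`
times the corresponding volume deficit to the power `q`. Applying the inclusions once more,
at `ε/A` and `Aε`, together with the scaling law `|Ω_β \ 𝑇̃Ω_β(Aε)| = A^N |Ω_β \ 𝑇̃Ω_β(ε)|`,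
the deficits of the truncated cones are comparable to `|Ω_β \ 𝑇̃Ω_β(ε)|` up to the factor
`A^N`, since `0 < A < 1`.
-/

theorem sin_div_sqrt_two_mul_one_sub_cos_mem_Ioo {β : ℝ} (hβ₀ : 0 < β) (hβπ : β < π) :
    sin β / √(2 * (1 - cos β)) ∈ Set.Ioo 0 1 := by
  have hsin : 0 < sin β := sin_pos_of_pos_of_lt_pi hβ₀ hβπ
  have hcos : cos β < 1 := by nlinarith [sin_sq_add_cos_sq β]
  have hden : 0 < √(2 * (1 - cos β)) := sqrt_pos.mpr (by linarith)
  refine ⟨div_pos hsin hden, (div_lt_one hden).mpr ?_⟩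
  rw [lt_sqrt hsin.le]
  nlinarith [sin_sq_add_cos_sq β]

theorem exists_bounds_of_expansion {gap v : ℝ → ℝ} {b : ℝ} (hb : 0 < b)
    (hexp : ∀ η > (0 : ℝ), ∃ δ > (0 : ℝ), ∀ ε ∈ Set.Ioo (0 : ℝ) δ,
      |gap ε - b * v ε| ≤ η * v ε) :
    ∃ δ > (0 : ℝ), ∀ ε ∈ Set.Ioo (0 : ℝ) δ,
      b / 2 * v ε ≤ gap ε ∧ gap ε ≤ 3 * b / 2 * v ε := by
  obtain ⟨δ, hδ, hgap⟩ := hexp (b / 2) (half_pos hb)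
  refine ⟨δ, hδ, fun ε hε => ?_⟩
  obtain ⟨hlow, hup⟩ := abs_le.mp (hgap ε hε)
  constructor <;> linarith

section Deficit

variable {X : Type*} [MeasurableSpace X] {μ : Measure X}

theorem toReal_measure_diff_le_of_subset {U S S' : Set X} (hU : μ U ≠ ∞) (h : S ⊆ S') :
    (μ (U \ S')).toReal ≤ (μ (U \ S)).toReal :=
  ENNReal.toReal_mono (measure_ne_top_of_subset Set.sdiff_subset hU)
    (measure_mono (Set.sdiff_subset_sdiff_right h))

variable {Ω T : ℝ → Set X} {N : ℕ} {A : ℝ}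

theorem pow_mul_deficit_le (hfin : μ (Ω 0) ≠ ∞) (hA : A ∈ Set.Ioo 0 1)
    (hincl : ∀ ε ∈ Set.Ico (0 : ℝ) 1, Ω ε ⊆ T ε ∧ T ε ⊆ Ω (A * ε))
    (hscale : ∀ c ∈ Set.Ioc (0 : ℝ) 1, ∀ ε ∈ Set.Ioo (0 : ℝ) 1,
      μ (Ω 0 \ T (c * ε)) = ENNReal.ofReal (c ^ N) * μ (Ω 0 \ T ε))
    {ε : ℝ} (hε : ε ∈ Set.Ioo 0 1) :
    A ^ N * (μ (Ω 0 \ T ε)).toReal ≤ (μ (Ω 0 \ Ω (A * ε))).toReal := by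
  have hAε : A * ε ∈ Set.Ico (0 : ℝ) 1 :=
    ⟨mul_nonneg hA.1.le hε.1.le, by nlinarith [hA.1, hA.2, hε.1, hε.2]⟩
  rw [← ENNReal.toReal_ofReal (pow_nonneg hA.1.le N), ← ENNReal.toReal_mul,
    ← hscale A ⟨hA.1, hA.2.le⟩ ε hε]
  exact toReal_measure_diff_le_of_subset hfin (hincl (A * ε) hAε).1

theorem deficit_le_div_pow (hfin : μ (Ω 0) ≠ ∞) (hA : A ∈ Set.Ioo 0 1)
    (hincl : ∀ ε ∈ Set.Ico (0 : ℝ) 1, Ω ε ⊆ T ε ∧ T ε ⊆ Ω (A * ε))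
    (hscale : ∀ c ∈ Set.Ioc (0 : ℝ) 1, ∀ ε ∈ Set.Ioo (0 : ℝ) 1,
      μ (Ω 0 \ T (c * ε)) = ENNReal.ofReal (c ^ N) * μ (Ω 0 \ T ε))
    {ε : ℝ} (hε : ε ∈ Set.Ioo 0 A) :
    (μ (Ω 0 \ Ω ε)).toReal ≤ (μ (Ω 0 \ T ε)).toReal / A ^ N := by
  have hεA : ε / A ∈ Set.Ioo (0 : ℝ) 1 :=
    ⟨div_pos hε.1 hA.1, (div_lt_one hA.1).mpr hε.2⟩
  have hcancel : A * (ε / A) = ε := mul_div_cancel₀ ε hA.1.ne'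
  have hsub : T (ε / A) ⊆ Ω ε := by
    simpa only [hcancel] using (hincl (ε / A) ⟨hεA.1.le, hεA.2⟩).2
  have hscaled := hscale A ⟨hA.1, hA.2.le⟩ (ε / A) hεA
  rw [hcancel] at hscaled
  rw [le_div_iff₀ (pow_pos hA.1 N), hscaled, ENNReal.toReal_mul,
    ENNReal.toReal_ofReal (pow_nonneg hA.1.le N), mul_comm]
  exact mul_le_mul_of_nonneg_left (toReal_measure_diff_le_of_subset hfin hsub)
    (pow_nonneg hA.1.le N)

theorem exists_two_sided_gap_estimate {lam1 : Set X → ℝ} {q b : ℝ}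
    (hmono : Antitone lam1) (hq : 0 ≤ q) (hb : 0 < b)
    (hexp : ∀ η > (0 : ℝ), ∃ δ > (0 : ℝ), ∀ ε ∈ Set.Ioo (0 : ℝ) δ,
      |lam1 (Ω ε) - lam1 (Ω 0) - b * (μ (Ω 0 \ Ω ε)).toReal ^ q|
        ≤ η * (μ (Ω 0 \ Ω ε)).toReal ^ q)
    (hA : A ∈ Set.Ioo 0 1)
    (hincl : ∀ ε ∈ Set.Ico (0 : ℝ) 1, Ω ε ⊆ T ε ∧ T ε ⊆ Ω (A * ε))
    (hscale : ∀ c ∈ Set.Ioc (0 : ℝ) 1, ∀ ε ∈ Set.Ioo (0 : ℝ) 1,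
      μ (Ω 0 \ T (c * ε)) = ENNReal.ofReal (c ^ N) * μ (Ω 0 \ T ε))
    (hfin : μ (Ω 0) ≠ ∞) :
    ∃ d₁ > (0 : ℝ), ∃ d₂ > (0 : ℝ), ∃ ε₀ > (0 : ℝ), ∀ ε ∈ Set.Ioo (0 : ℝ) ε₀,
      d₁ * (μ (Ω 0 \ T ε)).toReal ^ q ≤ lam1 (T ε) - lam1 (Ω 0) ∧
      lam1 (T ε) - lam1 (Ω 0) ≤ d₂ * (μ (Ω 0 \ T ε)).toReal ^ q := by
  obtain ⟨δ, hδ, hgap⟩ := exists_bounds_of_expansion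
    (gap := fun ε => lam1 (Ω ε) - lam1 (Ω 0)) (v := fun ε => (μ (Ω 0 \ Ω ε)).toReal ^ q)
    hb hexp
  have hAN : 0 < A ^ N := pow_pos hA.1 N
  refine ⟨b / 2 * (A ^ N) ^ q, by positivity, 3 * b / 2 / (A ^ N) ^ q, by positivity,
    min δ A, lt_min hδ hA.1, ?_⟩
  rintro ε ⟨hε₀, hεlt⟩
  have hεδ : ε < δ := hεlt.trans_le (min_le_left _ _)
  have hεA : ε < A := hεlt.trans_le (min_le_right _ _)
  have hε1 : ε ∈ Set.Ico (0 : ℝ) 1 := ⟨hε₀.le, hεA.trans hA.2⟩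
  have hM : 0 ≤ (μ (Ω 0 \ T ε)).toReal := ENNReal.toReal_nonneg
  constructor
  · calc b / 2 * (A ^ N) ^ q * (μ (Ω 0 \ T ε)).toReal ^ q
        = b / 2 * (A ^ N * (μ (Ω 0 \ T ε)).toReal) ^ q := by
          rw [mul_rpow hAN.le hM]; ring
      _ ≤ b / 2 * (μ (Ω 0 \ Ω (A * ε))).toReal ^ q := by
          gcongr
          exact pow_mul_deficit_le hfin hA hincl hscale ⟨hε₀, hε1.2⟩
      _ ≤ lam1 (Ω (A * ε)) - lam1 (Ω 0) :=
          (hgap (A * ε) ⟨mul_pos hA.1 hε₀, by nlinarith [hA.2]⟩).1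
      _ ≤ lam1 (T ε) - lam1 (Ω 0) := sub_le_sub_right (hmono (hincl ε hε1).2) _
  · calc lam1 (T ε) - lam1 (Ω 0) ≤ lam1 (Ω ε) - lam1 (Ω 0) :=
          sub_le_sub_right (hmono (hincl ε hε1).1) _
      _ ≤ 3 * b / 2 * (μ (Ω 0 \ Ω ε)).toReal ^ q := (hgap ε ⟨hε₀, hεδ⟩).2
      _ ≤ 3 * b / 2 * ((μ (Ω 0 \ T ε)).toReal / A ^ N) ^ q := by
          gcongr
          exact deficit_le_div_pow hfin hA hincl hscale ⟨hε₀, hεA⟩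
      _ = 3 * b / 2 / (A ^ N) ^ q * (μ (Ω 0 \ T ε)).toReal ^ q := by
          rw [div_rpow hM hAN.le]; ring

end Deficit

/-- two-sided estimate for the first Dirichlet eigenvalue of the
Lipschitz modification `𝑇̃Ω_β(ε)` of the spherical cone `Ω_β` (of angle
`β ∈ (π/2, π)`): there are `d₁, d₂ > 0` with
`d₁ |Ω_β \ 𝑇̃Ω_β(ε)|^q ≤ λ₁[𝑇̃Ω_β(ε)] - λ₁[Ω_β] ≤ d₂ |Ω_β \ 𝑇̃Ω_β(ε)|^q`,
`q = (N + 2l_β - 2)/N`, for all small `ε > 0`, assuming (i) domain monotonicity of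
`λ₁`, (ii) the asymptotic expansion for `λ₁[Ω_β(ε)]` with leading coefficient
`b > 0`, (iii) the inclusions `Ω_β(ε) ⊆ 𝑇̃Ω_β(ε) ⊆ Ω_β(Aε)`, and the scaling
property of the measure `|Ω_β \ 𝑇̃Ω_β(cε)| = c^N |Ω_β \ 𝑇̃Ω_β(ε)|`. -/
theorem two_sided_eigenvalue_estimate (N : ℕ) (hN : 2 ≤ N)
    (β : ℝ) (hβ : π / 2 < β) (hβ' : β < π)
    (lβ : ℝ) (hlβ : 0 < lβ)
    (Ω : ℝ → Set (EuclideanSpace ℝ (Fin N)))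
    (hΩ : ∀ δ, Ω δ = {x | δ < ‖x‖ ∧ ‖x‖ < 1 ∧ ‖x‖ * Real.cos β < x ⟨0, by omega⟩})
    (T : ℝ → Set (EuclideanSpace ℝ (Fin N)))
    (lam1 : Set (EuclideanSpace ℝ (Fin N)) → ℝ)
    (hmono : ∀ A B : Set (EuclideanSpace ℝ (Fin N)), A ⊆ B → lam1 B ≤ lam1 A)
    (q : ℝ) (hq : q = ((N : ℝ) + 2 * lβ - 2) / N)
    (b : ℝ) (hb : 0 < b)
    (hexp : ∀ η > (0 : ℝ), ∃ δ > (0 : ℝ), ∀ ε ∈ Set.Ioo (0 : ℝ) δ,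
      |lam1 (Ω ε) - lam1 (Ω 0) - b * (volume (Ω 0 \ Ω ε)).toReal ^ q|
        ≤ η * (volume (Ω 0 \ Ω ε)).toReal ^ q)
    (A : ℝ) (hA : A = Real.sin β / Real.sqrt (2 * (1 - Real.cos β)))
    (hincl : ∀ ε ∈ Set.Ico (0 : ℝ) 1, Ω ε ⊆ T ε ∧ T ε ⊆ Ω (A * ε))
    (hscale : ∀ c ∈ Set.Ioc (0 : ℝ) 1, ∀ ε ∈ Set.Ioo (0 : ℝ) 1,
      volume (Ω 0 \ T (c * ε)) = ENNReal.ofReal (c ^ N) * volume (Ω 0 \ T ε)) :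
    ∃ d₁ > (0 : ℝ), ∃ d₂ > (0 : ℝ), ∃ ε₀ > (0 : ℝ), ∀ ε ∈ Set.Ioo (0 : ℝ) ε₀,
      d₁ * (volume (Ω 0 \ T ε)).toReal ^ q ≤ lam1 (T ε) - lam1 (Ω 0) ∧
      lam1 (T ε) - lam1 (Ω 0) ≤ d₂ * (volume (Ω 0 \ T ε)).toReal ^ q := by
  have hA01 : A ∈ Set.Ioo 0 1 :=
    hA ▸ sin_div_sqrt_two_mul_one_sub_cos_mem_Ioo (by linarith [pi_pos]) hβ'
  have hq0 : 0 ≤ q := by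
    have hN2 : (2 : ℝ) ≤ N := by exact_mod_cast hN
    rw [hq]
    exact div_nonneg (by linarith) (by positivity)
  have hfin : volume (Ω 0) ≠ ∞ := by
    refine measure_ne_top_of_subset (fun x hx => ?_) (measure_ball_lt_top (x := 0) (r := 1)).ne
    rw [hΩ] at hx
    simpa using hx.2.1
  exact exists_two_sided_gap_estimate (fun _ _ h => hmono _ _ h) hq0 hb hexp hA01 hincl hscale
    hfin
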